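/- arXiv:math/0612337 — 3 statements merged into one kernel-verified Lean document; each statement's English description precedes it below -/
import Mathlib

section
/- Let W = (W_t)_{t≥0} be a standard Brownian motion, T > 0, and let a, b : [0,T] → ℝ be continuous functions with a(0) < 0 < b(0) and a(t) < b(t) for all t ∈ [0,T]. If (a_n) and (b_n) are sequences of piecewise linear functions on [0,T] with a_n → a and b_n → b uniformly on [0,T], then lim_{n→∞} P(a_n(t) < W_t < b_n(t) for all t ∈ [0,T]) = P(a(t) < W_t < b(t) for all t ∈ [0,T]). -/
open MeasureTheory ProbabilityTheory Filter Set

/-- A standard Brownian motion on `[0,∞)`: a process with (a.s.) continuous paths,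
`W 0 = 0` a.s., centered Gaussian increments of variance `t - u`, and independent
increments. -/
structure IsStandardBM {Ω : Type*} [MeasureSpace Ω] (W : ℝ → Ω → ℝ) : Prop where
  meas : ∀ t : ℝ, Measurable (W t)
  init : ∀ᵐ ω : Ω ∂ℙ, W 0 ω = 0
  cont : ∀ᵐ ω : Ω ∂ℙ, ContinuousOn (fun t => W t ω) (Set.Ici 0)
  gauss_incr : ∀ u t : ℝ, 0 ≤ u → u ≤ t →
    Measure.map (fun ω => W t ω - W u ω) ℙ = gaussianReal 0 (Real.toNNReal (t - u))
  indep_incr : ∀ (n : ℕ) (τ : Fin (n + 1) → ℝ), (∀ i, 0 ≤ τ i) → Monotone τ →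
    iIndepFun
      (fun i : Fin n => fun ω => W (τ i.succ) ω - W (τ i.castSucc) ω) ℙ

/-- `f` is piecewise linear on `[0, T]`: there is a finite partition of `[0, T]` on whose
open subintervals `f` is linear. -/
def PiecewiseLinearOn (T : ℝ) (f : ℝ → ℝ) : Prop :=
  ∃ n : ℕ, ∃ τ : Fin (n + 1) → ℝ, τ 0 = 0 ∧ τ (Fin.last n) = T ∧ StrictMono τ ∧
    ∀ i : Fin n, ∃ p q : ℝ, ∀ u ∈ Set.Ioo (τ i.castSucc) (τ i.succ), f u = p * u + q

/-!
The lower bound `P(a < W < b) ≤ liminf` holds for every process with continuous paths: a path in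
the open tube keeps a positive distance from its compact boundary, so it lies in the tubes of all
`(aₙ, bₙ)` with `n` large. Dually, the `limsup` is at most the probability of the closed tube
`a ≤ W ≤ b`, and it remains to see that a Brownian path a.s. does not touch `a` or `b` without
crossing. Touching `a` after a time `δ > 0` means `inf (W eₙ - a eₙ) = 0` along a countable set of
times `eₙ ≥ δ`. Since `W eₙ = (W δ - W 0) + (W eₙ - W δ)` with an independent `N(0, δ)` first
summand, Cauchy–Schwarz against the Gaussian density gives `P(W ∈ B)² ≤ e^{c²/δ} P(W + c ∈ B)` for
every shift `c`. The events `{inf (W eₙ + c - a eₙ) = 0}` are disjoint in `c`, so one of them is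
null, and then so is the one with `c = 0`.
-/

open scoped ENNReal NNReal Topology

lemma Fin.monotone_cons {α : Type*} [Preorder α] {n : ℕ} {f : Fin n → α} {a : α} :
    Monotone (Fin.cons a f : Fin (n + 1) → α) ↔ (∀ j, a ≤ f j) ∧ Monotone f := by
  simpa only [monotone_iff_forall_lt, Relator.LiftFun] using Fin.liftFun_cons (· ≤ ·)

lemma exists_seq_subset_dense {X : Type*} [TopologicalSpace X]
    [TopologicalSpace.PseudoMetrizableSpace X] [TopologicalSpace.SeparableSpace X]
    {S : Set X} (hS : S.Nonempty) : ∃ u : ℕ → X, range u ⊆ S ∧ S ⊆ closure (range u) := by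
  obtain ⟨D, hDS, hD, hSD⟩ :=
    (TopologicalSpace.IsSeparable.of_separableSpace S).exists_countable_dense_subset
  obtain ⟨u, rfl⟩ := hD.exists_eq_range (closure_nonempty_iff.1 (hS.mono hSD))
  exact ⟨u, hDS, hSD⟩

section Dense

variable {X α : Type*} [TopologicalSpace X] {S D : Set X}

lemma IsClosed.le_on_of_le_on_dense [TopologicalSpace α] [Preorder α] [OrderClosedTopology α]
    (hS : IsClosed S) (hDS : D ⊆ S) (hSD : S ⊆ closure D) {f g : X → α}
    (hf : ContinuousOn f S) (hg : ContinuousOn g S) (h : ∀ x ∈ D, f x ≤ g x) :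
    ∀ x ∈ S, f x ≤ g x := fun _ hx =>
  (closure_minimal (t := {x | x ∈ S ∧ f x ≤ g x}) (fun y hy => ⟨hDS hy, h y hy⟩)
    (hS.isClosed_le hf hg) (hSD hx)).2

lemma exists_mem_of_eventually_nhdsWithin (hDS : D ⊆ S) (hSD : S ⊆ closure D) {x : X}
    (hx : x ∈ S) {p : X → Prop} (hp : ∀ᶠ y in 𝓝[S] x, p y) : ∃ y ∈ D, p y :=
  haveI := mem_closure_iff_nhdsWithin_neBot.1 (hSD hx)
  ((hp.filter_mono (nhdsWithin_mono x hDS)).and self_mem_nhdsWithin).exists.imp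
    fun _ h => ⟨h.2, h.1⟩

end Dense

lemma le_of_forall_le_add_one_div {x y : ℝ} (h : ∀ k : ℕ, x ≤ y + 1 / (k + 1)) : x ≤ y := by
  have := (tendsto_const_nhds (x := y)).add tendsto_one_div_add_atTop_nhds_zero_nat
  rw [add_zero] at this
  exact le_of_tendsto_of_tendsto' tendsto_const_nhds this h

lemma IsCompact.exists_nat_margin {S : Set ℝ} (hS : IsCompact S) {f g h : ℝ → ℝ}
    (hg : ContinuousOn g S) (hf : ContinuousOn f S) (hh : ContinuousOn h S)
    (hlt : ∀ t ∈ S, g t < f t ∧ f t < h t) :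
    ∃ k : ℕ, ∀ t ∈ S, g t + 1 / (k + 1) ≤ f t ∧ f t ≤ h t - 1 / (k + 1) := by
  obtain ⟨εg, hεg, hlg⟩ := hS.exists_forall_le' (hf.sub hg) fun t ht => sub_pos.2 (hlt t ht).1
  obtain ⟨εh, hεh, hlh⟩ := hS.exists_forall_le' (hh.sub hf) fun t ht => sub_pos.2 (hlt t ht).2
  obtain ⟨k, hk⟩ := exists_nat_one_div_lt (lt_min hεg hεh)
  refine ⟨k, fun t ht => ?_⟩
  have h₁ := hlg t ht
  have h₂ := hlh t ht
  simp only [Pi.sub_apply] at h₁ h₂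
  exact ⟨by linarith [min_le_left εg εh], by linarith [min_le_right εg εh]⟩

lemma isGLB_range_iff {ι : Type*} {g : ι → ℝ} {x : ℝ} :
    IsGLB (range g) x ↔ (∀ i, x ≤ g i) ∧ ∀ k : ℕ, ∃ i, g i < x + 1 / (k + 1) := by
  refine ⟨fun h => ⟨fun i => h.1 (mem_range_self i), fun k => ?_⟩, fun ⟨hx, hlt⟩ => ?_⟩
  · obtain ⟨_, ⟨i, rfl⟩, -, hi⟩ :=
      h.exists_between (lt_add_of_pos_right x Nat.one_div_pos_of_nat)
    exact ⟨i, hi⟩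
  · refine ⟨forall_mem_range.2 hx, fun y hy => le_of_not_gt fun hxy => ?_⟩
    obtain ⟨k, hk⟩ := exists_nat_one_div_lt (sub_pos.2 hxy)
    obtain ⟨i, hi⟩ := hlt k
    linarith [hy (mem_range_self i)]

lemma eq_of_isGLB_range_add_const_zero {ι : Type*} {g : ι → ℝ} {c c' : ℝ}
    (h : IsGLB (range fun i => g i + c) 0) (h' : IsGLB (range fun i => g i + c') 0) :
    c = c' := by
  have key : ∀ {c c' : ℝ}, IsGLB (range fun i => g i + c) 0 →
      IsGLB (range fun i => g i + c') 0 → c' ≤ c := fun h h' =>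
    sub_nonpos.1 (h'.2 (forall_mem_range.2 fun i => by linarith [h.1 (mem_range_self i)]))
  exact le_antisymm (key h' h) (key h h')

lemma exists_isGLB_range_max_of_eq_zero {T : ℝ} {u : ℕ → ℝ} (hus : range u ⊆ Icc 0 T)
    (hu : Icc 0 T ⊆ closure (range u)) {h : ℝ → ℝ} (hh : ContinuousOn h (Icc 0 T))
    (hnonneg : ∀ t ∈ Icc 0 T, 0 ≤ h t) (h0 : 0 < h 0) {t₀ : ℝ} (ht₀ : t₀ ∈ Icc 0 T)
    (hzero : h t₀ = 0) :
    ∃ m : ℕ, IsGLB (range fun n => h (max (1 / (m + 1)) (u n))) 0 := by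
  have ht₀_pos : 0 < t₀ := ht₀.1.lt_of_ne (by rintro rfl; linarith)
  -- Clipping the times below at `1 / (m + 1) < t₀` keeps them away from `0` but leaves the
  -- times near `t₀` unchanged.
  obtain ⟨m, hm⟩ := exists_nat_one_div_lt ht₀_pos
  refine ⟨m, forall_mem_range.2 fun n => hnonneg _ ⟨?_, ?_⟩,
    fun y hy => le_of_not_gt fun hy0 => ?_⟩
  · exact le_max_of_le_left Nat.one_div_pos_of_nat.le
  · exact max_le (hm.le.trans ht₀.2) (hus (mem_range_self n)).2
  have hnear : ∀ᶠ t in 𝓝[Icc 0 T] t₀, 1 / ((m : ℝ) + 1) < t ∧ h t < y :=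
    (eventually_nhdsWithin_of_eventually_nhds (eventually_gt_nhds hm)).and
      ((hh t₀ ht₀).eventually_lt_const (hzero ▸ hy0))
  obtain ⟨_, ⟨n, rfl⟩, hn, hhn⟩ := exists_mem_of_eventually_nhdsWithin hus hu ht₀ hnear
  have := hy (mem_range_self n)
  rw [max_eq_right hn.le] at this
  linarith

lemma exists_isGLB_range_of_not_forall_lt {T : ℝ} {u : ℕ → ℝ} (hus : range u ⊆ Icc 0 T)
    (hu : Icc 0 T ⊆ closure (range u)) {f a b : ℝ → ℝ} (hf : ContinuousOn f (Icc 0 T))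
    (ha : ContinuousOn a (Icc 0 T)) (hb : ContinuousOn b (Icc 0 T)) (ha0 : a 0 < f 0)
    (hb0 : f 0 < b 0) (hgrid : ∀ n, a (u n) ≤ f (u n) ∧ f (u n) ≤ b (u n))
    (hout : ¬ ∀ t ∈ Icc 0 T, a t < f t ∧ f t < b t) :
    ∃ m : ℕ, IsGLB (range fun n => (f - a) (max (1 / (m + 1)) (u n))) 0 ∨
      IsGLB (range fun n => (b - f) (max (1 / (m + 1)) (u n))) 0 := by
  have hle : ∀ t ∈ Icc 0 T, a t ≤ f t ∧ f t ≤ b t := fun t ht =>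
    ⟨isClosed_Icc.le_on_of_le_on_dense hus hu ha hf
        (forall_mem_range.2 fun n => (hgrid n).1) t ht,
      isClosed_Icc.le_on_of_le_on_dense hus hu hf hb
        (forall_mem_range.2 fun n => (hgrid n).2) t ht⟩
  push Not at hout
  obtain ⟨t₀, ht₀, hcross⟩ := hout
  by_cases hat : a t₀ < f t₀
  · obtain ⟨m, hm⟩ := exists_isGLB_range_max_of_eq_zero hus hu (hb.sub hf)
      (fun t ht => sub_nonneg.2 (hle t ht).2) (sub_pos.2 hb0) ht₀
      (sub_eq_zero.2 (le_antisymm (hle t₀ ht₀).2 (hcross hat)).symm)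
    exact ⟨m, Or.inr hm⟩
  · obtain ⟨m, hm⟩ := exists_isGLB_range_max_of_eq_zero hus hu (hf.sub ha)
      (fun t ht => sub_nonneg.2 (hle t ht).1) (sub_pos.2 ha0) ht₀
      (sub_eq_zero.2 (le_antisymm (not_lt.1 hat) (hle t₀ ht₀).1))
    exact ⟨m, Or.inl hm⟩

lemma lintegral_sq_le_mul_of_sq_le {α : Type*} [MeasurableSpace α] {μ : Measure α}
    {h F G : α → ℝ≥0∞} (hF : AEMeasurable F μ) (hG : AEMeasurable G μ)
    (hFG : ∀ x, h x ^ 2 ≤ F x * G x) :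
    (∫⁻ x, h x ∂μ) ^ 2 ≤ (∫⁻ x, F x ∂μ) * ∫⁻ x, G x ∂μ := by
  have hsq : ∀ z : ℝ≥0∞, (z ^ (1 / 2 : ℝ)) ^ (2 : ℝ) = z := fun z => by
    rw [← ENNReal.rpow_mul]
    norm_num
  have hh : ∀ x, h x ≤ F x ^ (1 / 2 : ℝ) * G x ^ (1 / 2 : ℝ) := fun x => by
    rw [← ENNReal.mul_rpow_of_nonneg _ _ (by norm_num), one_div,
      ENNReal.le_rpow_inv_iff (by norm_num), ENNReal.rpow_two]
    exact hFG x
  have hCS := ENNReal.lintegral_mul_le_Lp_mul_Lq μ Real.HolderConjugate.two_two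
    (hF.pow_const (1 / 2 : ℝ)) (hG.pow_const (1 / 2 : ℝ))
  simp only [Pi.mul_apply, hsq] at hCS
  calc (∫⁻ x, h x ∂μ) ^ 2
      ≤ ((∫⁻ x, F x ∂μ) ^ (1 / 2 : ℝ) * (∫⁻ x, G x ∂μ) ^ (1 / 2 : ℝ)) ^ 2 :=
        pow_le_pow_left₀ zero_le ((lintegral_mono hh).trans hCS) 2
    _ = (∫⁻ x, F x ∂μ) * ∫⁻ x, G x ∂μ := by
        rw [mul_pow, ← ENNReal.rpow_two, ← ENNReal.rpow_two, hsq, hsq]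

lemma gaussianPDFReal_add_sq (m : ℝ) (v : ℝ≥0) (x c : ℝ) :
    gaussianPDFReal m v (x + c) ^ 2
      = gaussianPDFReal m v x * (Real.exp (c ^ 2 / v) * gaussianPDFReal m v (x + 2 * c)) := by
  have hexp : ((2 : ℕ) : ℝ) * (-(x + c - m) ^ 2 / (2 * v))
      = c ^ 2 / v + (-(x - m) ^ 2 / (2 * v) + -(x + 2 * c - m) ^ 2 / (2 * v)) := by
    by_cases hv : (v : ℝ) = 0
    · simp [hv]
    · field_simp
      ring
  simp only [gaussianPDFReal]
  rw [mul_pow, ← Real.exp_nat_mul, hexp, Real.exp_add, Real.exp_add]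
  ring

lemma gaussianReal_sq_le_shift (m : ℝ) {v : ℝ≥0} (hv : v ≠ 0) (c : ℝ) {A : Set ℝ}
    (hA : MeasurableSet A) :
    gaussianReal m v A ^ 2
      ≤ gaussianReal m v ((· + c) ⁻¹' A) * ENNReal.ofReal (Real.exp (c ^ 2 / v)) := by
  have hA' : MeasurableSet ((· + c) ⁻¹' A) := measurable_add_const c hA
  have hshift : gaussianReal m v A
      = ∫⁻ x, ((· + c) ⁻¹' A).indicator (fun x => gaussianPDF m v (x + c)) x := by
    rw [gaussianReal_apply m hv A, ← lintegral_indicator hA,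
      ← lintegral_add_right_eq_self _ c]
    rfl
  have hmeas : Measurable fun x => gaussianPDF m v (x + 2 * c) :=
    (measurable_gaussianPDF m v).comp (measurable_add_const _)
  have hG : ∫⁻ x, ENNReal.ofReal (Real.exp (c ^ 2 / v)) * gaussianPDF m v (x + 2 * c)
      = ENNReal.ofReal (Real.exp (c ^ 2 / v)) := by
    rw [lintegral_const_mul _ hmeas,
      lintegral_add_right_eq_self (gaussianPDF m v), lintegral_gaussianPDF_eq_one m hv, mul_one]
  rw [hshift, gaussianReal_apply m hv, ← lintegral_indicator hA', ← hG]
  refine lintegral_sq_le_mul_of_sq_le ((measurable_gaussianPDF m v).indicator hA').aemeasurable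
    (hmeas.const_mul _).aemeasurable fun x => ?_
  by_cases hx : x ∈ (· + c) ⁻¹' A
  · simp only [indicator_of_mem hx, gaussianPDF,
      ← ENNReal.ofReal_pow (gaussianPDFReal_nonneg _ _ _), gaussianPDFReal_add_sq,
      ← ENNReal.ofReal_mul (Real.exp_pos _).le, ← ENNReal.ofReal_mul (gaussianPDFReal_nonneg _ _ _),
      le_refl]
  · simp [indicator_of_notMem hx]

lemma measure_sq_le_shift_of_indepFun {Ω E : Type*} [MeasurableSpace Ω] [MeasurableSpace E]
    {μ : Measure Ω} [IsProbabilityMeasure μ] {Y : Ω → E} {X : Ω → ℝ} (hY : Measurable Y)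
    (hX : Measurable X) (hYX : IndepFun Y X μ) {m : ℝ} {v : ℝ≥0} (hv : v ≠ 0)
    (hXlaw : μ.map X = gaussianReal m v) (c : ℝ) {M : Set (E × ℝ)} (hM : MeasurableSet M) :
    μ ((fun ω => (Y ω, X ω)) ⁻¹' M) ^ 2
      ≤ μ ((fun ω => (Y ω, X ω + c)) ⁻¹' M) * ENNReal.ofReal (Real.exp (c ^ 2 / v)) := by
  have hjoint : μ.map (fun ω => (Y ω, X ω)) = (μ.map Y).prod (gaussianReal m v) := by
    rw [← hXlaw]
    exact (indepFun_iff_map_prod_eq_prod_map_map hY.aemeasurable hX.aemeasurable).1 hYX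
  have : IsProbabilityMeasure (μ.map Y) := Measure.isProbabilityMeasure_map hY.aemeasurable
  have hMc : MeasurableSet (Prod.map id (· + c) ⁻¹' M) :=
    measurable_id.prodMap (measurable_add_const c) hM
  rw [show (fun ω => (Y ω, X ω + c)) ⁻¹' M
      = (fun ω => (Y ω, X ω)) ⁻¹' (Prod.map id (· + c) ⁻¹' M) from rfl,
    ← Measure.map_apply (hY.prodMk hX) hM, ← Measure.map_apply (hY.prodMk hX) hMc, hjoint,
    Measure.prod_apply hM, Measure.prod_apply hMc,
    ← lintegral_mul_const _ (measurable_measure_prodMk_left hMc)]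
  calc (∫⁻ y, gaussianReal m v (Prod.mk y ⁻¹' M) ∂μ.map Y) ^ 2
      ≤ (∫⁻ y, gaussianReal m v (Prod.mk y ⁻¹' M) ^ 2 ∂μ.map Y) * ∫⁻ _, 1 ∂μ.map Y :=
        lintegral_sq_le_mul_of_sq_le ((measurable_measure_prodMk_left hM).pow_const 2).aemeasurable
          aemeasurable_const fun _ => (mul_one _).ge
    _ ≤ ∫⁻ y, gaussianReal m v (Prod.mk y ⁻¹' (Prod.map id (· + c) ⁻¹' M))
          * ENNReal.ofReal (Real.exp (c ^ 2 / v)) ∂μ.map Y := by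
        rw [lintegral_const, measure_univ, mul_one, mul_one]
        exact lintegral_mono fun y => gaussianReal_sq_le_shift m hv c (measurable_prodMk_left hM)

lemma MeasureTheory.Measure.exists_measure_eq_zero_of_pairwise_disjoint {α ι : Type*}
    [MeasurableSpace α] [Uncountable ι] {μ : Measure α} [SFinite μ] {E : ι → Set α}
    (hE : ∀ i, MeasurableSet (E i)) (hd : Pairwise (Function.onFun Disjoint E)) :
    ∃ i, μ (E i) = 0 := by
  by_contra! h
  refine not_countable (α := ι) (countable_univ_iff.1 ?_)
  simpa [pos_iff_ne_zero, h] using Measure.countable_meas_pos_of_disjoint_iUnion (μ := μ) hE hd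

lemma measurableSet_isGLB_range {Ω : Type*} [MeasurableSpace Ω] {f : ℕ → Ω → ℝ}
    (hf : ∀ n, Measurable (f n)) (x : ℝ) :
    MeasurableSet {ω | IsGLB (range fun n => f n ω) x} := by
  simp only [isGLB_range_iff, ofPred_and, ofPred_forall, ofPred_exists]
  exact .inter (.iInter fun n => measurableSet_le measurable_const (hf n))
    (.iInter fun k => .iUnion fun n => measurableSet_lt (hf n) measurable_const)

-- Observed only at the countably many times `u n`, hence measurable; for a dense `u` and
-- continuous paths it is the closed tube `a ≤ X ≤ b`.
def gridTube {Ω : Type*} (u : ℕ → ℝ) (a b : ℝ → ℝ) (X : ℝ → Ω → ℝ) : Set Ω :=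
  ⋂ n, {ω | a (u n) ≤ X (u n) ω ∧ X (u n) ω ≤ b (u n)}

lemma iInter_gridTube_one_div {Ω : Type*} (u : ℕ → ℝ) (a b : ℝ → ℝ) (X : ℝ → Ω → ℝ) :
    ⋂ k : ℕ, gridTube u (fun t => a t - 1 / (k + 1)) (fun t => b t + 1 / (k + 1)) X
      = gridTube u a b X := by
  ext ω
  simp only [gridTube, mem_iInter, mem_ofPred_eq]
  refine ⟨fun h n => ⟨le_of_forall_le_add_one_div fun k => ?_,
    le_of_forall_le_add_one_div fun k => (h k n).2⟩, fun h k n => ?_⟩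
  · linarith [(h k n).1]
  · exact ⟨by linarith [(h n).1, Nat.one_div_pos_of_nat (α := ℝ) (n := k)],
      by linarith [(h n).2, Nat.one_div_pos_of_nat (α := ℝ) (n := k)]⟩

section Tube

variable {Ω : Type*} [MeasurableSpace Ω] {μ : Measure Ω} {S : Set ℝ} {X : ℝ → Ω → ℝ}
  {a b : ℝ → ℝ} {an bn : ℕ → ℝ → ℝ}

lemma measure_tube_le_liminf (hS : IsCompact S) (hX : ∀ᵐ ω ∂μ, ContinuousOn (X · ω) S)
    (ha : ContinuousOn a S) (hb : ContinuousOn b S) (hua : TendstoUniformlyOn an a atTop S)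
    (hub : TendstoUniformlyOn bn b atTop S) :
    μ {ω | ∀ t ∈ S, a t < X t ω ∧ X t ω < b t}
      ≤ liminf (fun n => μ {ω | ∀ t ∈ S, an n t < X t ω ∧ X t ω < bn n t}) atTop := by
  set A : ℕ → Set Ω := fun k =>
    {ω | ∀ t ∈ S, a t + 1 / (k + 1) ≤ X t ω ∧ X t ω ≤ b t - 1 / (k + 1)}
  have hmono : Monotone A := fun k k' hk ω hω t ht => by
    have := Nat.one_div_le_one_div (α := ℝ) hk
    exact ⟨by linarith [(hω t ht).1], by linarith [(hω t ht).2]⟩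
  have hcover : ∀ᵐ ω ∂μ, ω ∈ {ω | ∀ t ∈ S, a t < X t ω ∧ X t ω < b t} → ω ∈ ⋃ k, A k := by
    filter_upwards [hX] with ω hω hA
    exact mem_iUnion.2 (hS.exists_nat_margin ha hω hb hA)
  calc μ {ω | ∀ t ∈ S, a t < X t ω ∧ X t ω < b t}
      ≤ μ (⋃ k, A k) := measure_mono_ae hcover
    _ = ⨆ k, μ (A k) := hmono.measure_iUnion
    _ ≤ _ := iSup_le fun k => le_liminf_of_le (by isBoundedDefault) <| by
        filter_upwards [Metric.tendstoUniformlyOn_iff.1 hua _ (Nat.one_div_pos_of_nat (n := k)),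
          Metric.tendstoUniformlyOn_iff.1 hub _ (Nat.one_div_pos_of_nat (n := k))] with n hna hnb
        refine measure_mono fun ω hω t ht => ?_
        have := abs_lt.1 (hna t ht)
        have := abs_lt.1 (hnb t ht)
        exact ⟨by linarith [(hω t ht).1], by linarith [(hω t ht).2]⟩

lemma limsup_measure_tube_le_measure_gridTube [IsFiniteMeasure μ] {u : ℕ → ℝ}
    (hus : range u ⊆ S) (hX : ∀ t, Measurable (X t)) (hua : TendstoUniformlyOn an a atTop S)
    (hub : TendstoUniformlyOn bn b atTop S) :
    limsup (fun n => μ {ω | ∀ t ∈ S, an n t < X t ω ∧ X t ω < bn n t}) atTop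
      ≤ μ (gridTube u a b X) := by
  set G : ℕ → Set Ω := fun k =>
    gridTube u (fun t => a t - 1 / (k + 1)) (fun t => b t + 1 / (k + 1)) X
  have hG : ∀ k, MeasurableSet (G k) := fun k => .iInter fun n =>
    (measurableSet_le measurable_const (hX _)).inter (measurableSet_le (hX _) measurable_const)
  have hanti : Antitone G := fun k k' hk ω hω => mem_iInter.2 fun n => by
    have := Nat.one_div_le_one_div (α := ℝ) hk
    have := mem_iInter.1 hω n
    exact ⟨by linarith [this.1], by linarith [this.2]⟩
  have htend := tendsto_measure_iInter_atTop (μ := μ) (fun k => (hG k).nullMeasurableSet) hanti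
    ⟨0, measure_ne_top _ _⟩
  rw [iInter_gridTube_one_div] at htend
  refine ge_of_tendsto' htend fun k => limsup_le_of_le (by isBoundedDefault) ?_
  filter_upwards [Metric.tendstoUniformlyOn_iff.1 hua _ (Nat.one_div_pos_of_nat (n := k)),
    Metric.tendstoUniformlyOn_iff.1 hub _ (Nat.one_div_pos_of_nat (n := k))] with n hna hnb
  refine measure_mono fun ω hω => mem_iInter.2 fun i => ?_
  have hi := hus (mem_range_self i)
  have := abs_lt.1 (hna _ hi)
  have := abs_lt.1 (hnb _ hi)
  exact ⟨by dsimp only; linarith [(hω _ hi).1], by dsimp only; linarith [(hω _ hi).2]⟩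

end Tube

namespace IsStandardBM

variable {Ω : Type*} [MeasureSpace Ω] {W : ℝ → Ω → ℝ}

lemma neg (hW : IsStandardBM W) : IsStandardBM (-W) where
  meas t := (hW.meas t).neg
  init := by
    filter_upwards [hW.init] with ω h
    simp [h]
  cont := by
    filter_upwards [hW.cont] with ω h
    exact h.neg
  gauss_incr u t hu hut := by
    have : (fun ω => (-W) t ω - (-W) u ω) = (fun x => -x) ∘ fun ω => W t ω - W u ω := by
      ext
      simp only [Pi.neg_apply, Function.comp_apply]
      ring
    rw [this, ← Measure.map_map (g := fun x : ℝ => -x) (f := fun ω => W t ω - W u ω)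
      measurable_neg ((hW.meas t).sub (hW.meas u)), hW.gauss_incr u t hu hut,
      gaussianReal_map_neg, neg_zero]
  indep_incr n τ h0 hτ := by
    convert (hW.indep_incr n τ h0 hτ).comp (fun _ x => -x) fun _ => measurable_neg using 1
    ext i ω
    simp only [Pi.neg_apply, Function.comp_apply]
    ring

lemma indepFun_sub_first_increment (hW : IsStandardBM W) {n : ℕ} {τ : Fin (n + 2) → ℝ}
    (h0 : ∀ i, 0 ≤ τ i) (hτ : Monotone τ) :
    IndepFun (fun ω (k : Fin (n + 1)) => W (τ k.succ) ω - W (τ 1) ω)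
      (fun ω => W (τ 1) ω - W (τ 0) ω) ℙ := by
  set I : Fin (n + 1) → Ω → ℝ := fun i ω => W (τ i.succ) ω - W (τ i.castSucc) ω
  have hI : ∀ i, Measurable (I i) := fun i => (hW.meas _).sub (hW.meas _)
  have hind := indep_iSup_of_disjoint (fun i => (hI i).comap_le)
    (hW.indep_incr (n + 1) τ h0 hτ).iIndep (disjoint_compl_left (a := {0}))
  rw [IndepFun_iff_Indep]
  refine indep_of_indep_of_le_right (indep_of_indep_of_le_left hind ?_) ?_
  · simp_rw [MeasurableSpace.pi, MeasurableSpace.comap_iSup, MeasurableSpace.comap_comp,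
      iSup_le_iff, ← measurable_iff_comap_le, Function.comp_def]
    intro k
    induction k using Fin.induction with
    | zero => simp
    | succ k ih =>
      have hsucc : (fun ω => W (τ k.succ.succ) ω - W (τ 1) ω)
          = fun ω => (W (τ k.castSucc.succ) ω - W (τ 1) ω) + I k.succ ω := by
        ext ω
        simp only [I, Fin.succ_castSucc]
        ring
      rw [hsucc]
      exact ih.add (measurable_iff_comap_le.2
        (le_iSup₂ (f := fun i (_ : i ∈ ({0}ᶜ : Set (Fin (n + 1)))) =>
          MeasurableSpace.comap (I i) inferInstance) k.succ
          (Fin.succ_ne_zero k)))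
  · exact le_iSup₂ (f := fun i (_ : i ∈ ({0} : Set (Fin (n + 1)))) =>
      MeasurableSpace.comap (I i) inferInstance) 0 rfl

lemma indepFun_sub_of_le (hW : IsStandardBM W) {δ : ℝ} (hδ : 0 ≤ δ) {N : ℕ} {t : Fin N → ℝ}
    (ht : ∀ i, δ ≤ t i) :
    IndepFun (fun ω i => W (t i) ω - W δ ω) (fun ω => W δ ω - W 0 ω) ℙ := by
  set σ := Tuple.sort t
  set τ : Fin (N + 2) → ℝ := Fin.cons 0 (Fin.cons δ (t ∘ σ))
  have hτ : Monotone τ := Fin.monotone_cons.2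
    ⟨Fin.cases hδ fun j => hδ.trans (ht _),
      Fin.monotone_cons.2 ⟨fun j => ht _, Tuple.monotone_sort t⟩⟩
  have hτ0 : ∀ i, 0 ≤ τ i := fun i => hτ (Fin.zero_le i)
  convert (hW.indepFun_sub_first_increment hτ0 hτ).comp
    (measurable_pi_lambda (fun v i => v (σ.symm i).succ) fun i => measurable_pi_apply _)
    measurable_id using 1 <;>
  · ext
    simp [τ]

lemma indepFun_seq_sub_of_le [IsProbabilityMeasure (ℙ : Measure Ω)] (hW : IsStandardBM W)
    {δ : ℝ} (hδ : 0 ≤ δ) {e : ℕ → ℝ} (he : ∀ n, δ ≤ e n) :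
    IndepFun (fun ω n => W (e n) ω - W δ ω) (fun ω => W δ ω - W 0 ω) ℙ := by
  let m : ℕ → MeasurableSpace Ω := fun N =>
    MeasurableSpace.comap (fun ω (i : Fin N) => W (e i) ω - W δ ω) inferInstance
  have hmono : Monotone m := fun N N' hN => measurable_iff_comap_le.1
    ((measurable_pi_lambda (fun (v : Fin N' → ℝ) (i : Fin N) => v (Fin.castLE hN i))
      fun i => measurable_pi_apply _).comp
        (comap_measurable fun ω (i : Fin N') => W (e i) ω - W δ ω))
  have hle : MeasurableSpace.comap (fun ω n => W (e n) ω - W δ ω) inferInstance ≤ ⨆ N, m N := by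
    simp_rw [MeasurableSpace.pi, MeasurableSpace.comap_iSup, MeasurableSpace.comap_comp,
      iSup_le_iff]
    exact fun n => le_iSup_of_le (n + 1) (measurable_iff_comap_le.1
      ((measurable_pi_apply (⟨n, n.lt_succ_self⟩ : Fin (n + 1))).comp
        (comap_measurable fun ω (i : Fin (n + 1)) => W (e i) ω - W δ ω)))
  rw [IndepFun_iff_Indep]
  refine indep_of_indep_of_le_left (indep_iSup_of_directed_le (fun N => ?_) (fun N => ?_) ?_
    hmono.directed_le) hle
  · exact (IndepFun_iff_Indep _ _ _).1 (hW.indepFun_sub_of_le hδ fun i => he i)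
  · exact (measurable_pi_lambda _ fun i => (hW.meas _).sub (hW.meas _)).comap_le
  · exact ((hW.meas _).sub (hW.meas _)).comap_le

lemma measure_sq_le_shift [IsProbabilityMeasure (ℙ : Measure Ω)] (hW : IsStandardBM W) {δ : ℝ}
    (hδ : 0 < δ) {e : ℕ → ℝ} (he : ∀ n, δ ≤ e n) (c : ℝ) {B : Set (ℕ → ℝ)}
    (hB : MeasurableSet B) :
    ℙ {ω | (fun n => W (e n) ω) ∈ B} ^ 2
      ≤ ℙ {ω | (fun n => W (e n) ω + c) ∈ B} * ENNReal.ofReal (Real.exp (c ^ 2 / δ)) := by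
  set M : Set ((ℕ → ℝ) × ℝ) := {p | (fun n => p.1 n + p.2) ∈ B}
  have hM : MeasurableSet M :=
    hB.preimage (measurable_pi_lambda _ fun n =>
      ((measurable_pi_apply n).comp measurable_fst).add measurable_snd)
  have hlaw : (ℙ : Measure Ω).map (fun ω => W δ ω - W 0 ω) = gaussianReal 0 δ.toNNReal := by
    simpa using hW.gauss_incr 0 δ le_rfl hδ.le
  have key := measure_sq_le_shift_of_indepFun
    (measurable_pi_lambda _ fun n => (hW.meas _).sub (hW.meas δ)) ((hW.meas δ).sub (hW.meas 0))
    (hW.indepFun_seq_sub_of_le hδ.le he) (by simpa using hδ) hlaw c hM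
  rw [Real.coe_toNNReal _ hδ.le] at key
  convert key using 2 <;>
  · refine measure_congr ?_
    filter_upwards [hW.init] with ω h0
    change (_ ∈ B) = (_ ∈ B)
    congr! 1
    ext n
    simp only [Pi.sub_apply, h0]
    ring

lemma measure_isGLB_range_eq_zero [IsProbabilityMeasure (ℙ : Measure Ω)] (hW : IsStandardBM W)
    {δ : ℝ} (hδ : 0 < δ) {e : ℕ → ℝ} (he : ∀ n, δ ≤ e n) (α : ℕ → ℝ) :
    ℙ {ω | IsGLB (range fun n => W (e n) ω - α n) 0} = 0 := by
  set E : ℝ → Set Ω := fun c => {ω | IsGLB (range fun n => W (e n) ω - α n + c) 0}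
  have hE : ∀ c, MeasurableSet (E c) := fun c =>
    measurableSet_isGLB_range (fun n => ((hW.meas _).sub_const _).add_const c) 0
  obtain ⟨c, hc⟩ := Measure.exists_measure_eq_zero_of_pairwise_disjoint (μ := ℙ) hE
    fun c c' hne => disjoint_left.2 fun ω h h' => hne (eq_of_isGLB_range_add_const_zero h h')
  set B := {z : ℕ → ℝ | IsGLB (range fun n => z n - α n) 0}
  have hB : MeasurableSet B :=
    measurableSet_isGLB_range (fun n => (measurable_pi_apply n).sub_const _) 0
  have hshift : {ω | (fun n => W (e n) ω + c) ∈ B} = E c := by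
    ext ω
    simp only [B, E, mem_ofPred_eq, add_sub_right_comm]
  have := hW.measure_sq_le_shift hδ he c hB
  rwa [hshift, hc, zero_mul, nonpos_iff_eq_zero, pow_eq_zero_iff two_ne_zero] at this

lemma measure_gridTube_le [IsProbabilityMeasure (ℙ : Measure Ω)] (hW : IsStandardBM W) {T : ℝ}
    {u : ℕ → ℝ} (hus : range u ⊆ Icc 0 T) (hu : Icc 0 T ⊆ closure (range u)) {a b : ℝ → ℝ}
    (ha : ContinuousOn a (Icc 0 T)) (hb : ContinuousOn b (Icc 0 T)) (ha0 : a 0 < 0)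
    (hb0 : 0 < b 0) :
    ℙ (gridTube u a b W) ≤ ℙ {ω | ∀ t ∈ Icc 0 T, a t < W t ω ∧ W t ω < b t} := by
  set e : ℕ → ℕ → ℝ := fun m n => max (1 / (m + 1)) (u n)
  have he : ∀ m n : ℕ, 1 / ((m : ℝ) + 1) ≤ e m n := fun m n => le_max_left _ _
  set A := {ω | ∀ t ∈ Icc 0 T, a t < W t ω ∧ W t ω < b t}
  set N := ⋃ m, {ω | IsGLB (range fun n => W (e m n) ω - a (e m n)) 0} ∪
      {ω | IsGLB (range fun n => b (e m n) - W (e m n) ω) 0}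
  have hnull : ℙ N = 0 := by
    refine measure_iUnion_null fun m => measure_union_null
      (hW.measure_isGLB_range_eq_zero Nat.one_div_pos_of_nat (he m) _) ?_
    simpa only [Pi.neg_apply, neg_sub_neg] using
      hW.neg.measure_isGLB_range_eq_zero Nat.one_div_pos_of_nat (he m) fun n => -b (e m n)
  calc ℙ (gridTube u a b W) ≤ ℙ (A ∪ N) := measure_mono_ae ?_
    _ ≤ ℙ A + ℙ N := measure_union_le A N
    _ = ℙ A := by rw [hnull, add_zero]
  filter_upwards [hW.init, hW.cont] with ω h0 hcont hω
  refine or_iff_not_imp_left.2 fun hout => mem_iUnion.2 ?_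
  exact exists_isGLB_range_of_not_forall_lt hus hu (hcont.mono Icc_subset_Ici_self) ha hb
    (by rwa [h0]) (by rwa [h0]) (fun n => mem_iInter.1 hω n) hout

end IsStandardBM

theorem bcp_brownian_piecewise_linear_approximation_general
    {Ω : Type*} [MeasureSpace Ω] [IsProbabilityMeasure (ℙ : Measure Ω)]
    (W : ℝ → Ω → ℝ) (hW : IsStandardBM W)
    (T : ℝ) (hT : 0 < T) (a b : ℝ → ℝ)
    (ha : ContinuousOn a (Set.Icc 0 T)) (hb : ContinuousOn b (Set.Icc 0 T))
    (ha0 : a 0 < 0) (hb0 : 0 < b 0)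
    (an bn : ℕ → ℝ → ℝ)
    (hua : TendstoUniformlyOn an a atTop (Set.Icc 0 T))
    (hub : TendstoUniformlyOn bn b atTop (Set.Icc 0 T)) :
    Filter.Tendsto
      (fun n => ℙ {ω : Ω | ∀ t ∈ Set.Icc (0 : ℝ) T, an n t < W t ω ∧ W t ω < bn n t})
      atTop (nhds (ℙ {ω : Ω | ∀ t ∈ Set.Icc (0 : ℝ) T, a t < W t ω ∧ W t ω < b t})) := by
  obtain ⟨u, hus, hu⟩ := exists_seq_subset_dense (nonempty_Icc.2 hT.le)
  have hcont : ∀ᵐ ω ∂ℙ, ContinuousOn (fun t => W t ω) (Icc 0 T) := by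
    filter_upwards [hW.cont] with ω h using h.mono Icc_subset_Ici_self
  exact tendsto_of_le_liminf_of_limsup_le
    (measure_tube_le_liminf isCompact_Icc hcont ha hb hua hub)
    ((limsup_measure_tube_le_measure_gridTube hus hW.meas hua hub).trans
      (hW.measure_gridTube_le hus hu ha hb ha0 hb0))

/-- Convergence of two-sided boundary crossing probabilities for Brownian motion under
uniform approximation of the boundaries by piecewise linear functions. -/
theorem bcp_brownian_piecewise_linear_approximation
    {Ω : Type*} [MeasureSpace Ω] [IsProbabilityMeasure (ℙ : Measure Ω)]
    (W : ℝ → Ω → ℝ) (hW : IsStandardBM W)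
    (T : ℝ) (hT : 0 < T) (a b : ℝ → ℝ)
    (ha : ContinuousOn a (Set.Icc 0 T)) (hb : ContinuousOn b (Set.Icc 0 T))
    (ha0 : a 0 < 0) (hb0 : 0 < b 0)
    (hab : ∀ t ∈ Set.Icc (0 : ℝ) T, a t < b t)
    (an bn : ℕ → ℝ → ℝ)
    (han : ∀ n, PiecewiseLinearOn T (an n)) (hbn : ∀ n, PiecewiseLinearOn T (bn n))
    (hua : TendstoUniformlyOn an a atTop (Set.Icc 0 T))
    (hub : TendstoUniformlyOn bn b atTop (Set.Icc 0 T)) :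
    Filter.Tendsto
      (fun n => ℙ {ω : Ω | ∀ t ∈ Set.Icc (0 : ℝ) T, an n t < W t ω ∧ W t ω < bn n t})
      atTop (nhds (ℙ {ω : Ω | ∀ t ∈ Set.Icc (0 : ℝ) T, a t < W t ω ∧ W t ω < b t})) :=
  bcp_brownian_piecewise_linear_approximation_general W hW T hT a b ha hb ha0 hb0 an bn hua hub
end

section
/- (G-class.) Let σ̃ : [0,∞) → (0,∞) be continuously differentiable and let σ(t,x) = σ̃(t)·x for (t,x) ∈ [0,∞) × (0,∞). Let μ : [0,∞) × (0,∞) → ℝ be once continuously differentiable in t and twice in x. Then μ and σ satisfy the partial differential equation ∂/∂x [ (1/σ) · ∂σ/∂t + σ · ∂/∂x ( (1/2) · ∂σ/∂x − μ/σ ) ] = 0 for all (t,x) ∈ [0,∞) × (0,∞) if and only if there exist functions α, β : [0,∞) → ℝ such that μ(t,x) = α(t)x + β(t)·x·log x for all (t,x) ∈ [0,∞) × (0,∞). -/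
/-!
For `σ(t,x) = σ̃(t) x` the bracket of the PDE equals `σ̃'(t)/σ̃(t) - x ∂ₓ(μ/x)`, so the PDE says
that `x ∂ₓ(μ(t,x)/x)` is constant in `x`. On `(0,∞)` this means `∂ₓ(μ/x) = β(t)/x`, i.e.
`μ(t,x)/x = α(t) + β(t) log x`.
-/

open Real Set Filter Topology

noncomputable def reducibilityBracket (σ μ : ℝ → ℝ → ℝ) (t y : ℝ) : ℝ :=
  (1 / σ t y) * deriv (fun u => σ u y) t +
    σ t y * deriv (fun z => (1 / 2) * deriv (σ t) z - μ t z / σ t z) y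

section LinearDiffusion

variable {s : ℝ → ℝ} {σ : ℝ → ℝ → ℝ}

theorem reducibilityBracket_of_linear (hσ : ∀ t x, σ t x = s t * x) (μ : ℝ → ℝ → ℝ)
    {t y : ℝ} (hs : s t ≠ 0) (hy : y ≠ 0) :
    reducibilityBracket σ μ t y = deriv s t / s t - y * deriv (fun z => μ t z / z) y := by
  have hσ_t : deriv (fun u => σ u y) t = deriv s t * y := by
    simp only [hσ, deriv_mul_const_field]
  have hσ_x : deriv (σ t) = fun _ => s t := by
    ext z
    rw [show σ t = fun x => s t * x from funext (hσ t), deriv_const_mul_field, deriv_id'',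
      mul_one]
  have hdrift : (fun z => (1 / 2) * deriv (σ t) z - μ t z / σ t z) =
      fun z => (1 / 2) * s t - (s t)⁻¹ * (μ t z / z) := by
    ext z
    rw [hσ_x, hσ, mul_comm (s t), ← div_div, div_eq_inv_mul _ (s t)]
  rw [reducibilityBracket, hσ_t, hdrift, deriv_const_sub, deriv_const_mul_field, hσ]
  field_simp
  ring

theorem deriv_reducibilityBracket_of_linear (hσ : ∀ t x, σ t x = s t * x) (μ : ℝ → ℝ → ℝ)
    {t x : ℝ} (hs : s t ≠ 0) (hx : x ≠ 0) :
    deriv (reducibilityBracket σ μ t) x =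
      -deriv (fun y => y * deriv (fun z => μ t z / z) y) x := by
  have : reducibilityBracket σ μ t =ᶠ[𝓝 x]
      fun y => deriv s t / s t - y * deriv (fun z => μ t z / z) y := by
    filter_upwards [eventually_ne_nhds hx] with y hy
    exact reducibilityBracket_of_linear hσ μ hs hy
  rw [this.deriv_eq, deriv_const_sub]

end LinearDiffusion

theorem deriv_eq_div_of_eqOn_add_mul_log {g : ℝ → ℝ} {a b : ℝ}
    (hg : EqOn g (fun x => a + b * log x) (Ioi 0)) {x : ℝ} (hx : 0 < x) :
    deriv g x = b / x := by
  rw [(hg.eventuallyEq_of_mem (Ioi_mem_nhds hx)).deriv_eq]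
  exact (((hasDerivAt_log hx.ne').const_mul b).const_add a).deriv.trans (div_eq_mul_inv b x).symm

theorem deriv_id_mul_deriv_eq_zero_iff_eq_add_mul_log {g : ℝ → ℝ}
    (hg : ContDiffOn ℝ 2 g (Ioi 0)) :
    (∀ x, 0 < x → deriv (fun y => y * deriv g y) x = 0) ↔
      ∃ a b : ℝ, ∀ x, 0 < x → g x = a + b * log x := by
  constructor
  · intro h
    have hg' : DifferentiableOn ℝ (deriv g) (Ioi 0) :=
      (hg.deriv_of_isOpen isOpen_Ioi (by norm_num)).differentiableOn one_ne_zero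
    obtain ⟨b, hb⟩ : ∃ b, ∀ x ∈ Ioi (0 : ℝ), x * deriv g x = b :=
      isOpen_Ioi.exists_is_const_of_deriv_eq_zero (f := fun y => y * deriv g y)
        isPreconnected_Ioi (differentiableOn_id.mul hg') h
    have hlog : DifferentiableOn ℝ (fun x => b * log x) (Ioi 0) := fun x hx =>
      ((differentiableAt_log (ne_of_gt hx)).const_mul b).differentiableWithinAt
    obtain ⟨a, ha⟩ := isOpen_Ioi.exists_eq_add_of_deriv_eq isPreconnected_Ioi
      (hg.differentiableOn two_ne_zero) hlog fun x hx => by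
        rw [((hasDerivAt_log (ne_of_gt hx)).const_mul b).deriv, ← hb x hx, mul_comm x,
          mul_inv_cancel_right₀ (ne_of_gt hx)]
    exact ⟨a, b, fun x hx => by rw [ha hx]; ring⟩
  · rintro ⟨a, b, hab⟩ x hx
    have : (fun y => y * deriv g y) =ᶠ[𝓝 x] fun _ => b := by
      filter_upwards [Ioi_mem_nhds hx] with y hy
      rw [deriv_eq_div_of_eqOn_add_mul_log hab hy, mul_div_cancel₀ b (ne_of_gt hy)]
    rw [this.deriv_eq, deriv_const]

theorem pde_G_class_general
    (σt : ℝ → ℝ) (hσt_pos : ∀ t : ℝ, 0 < σt t)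
    (σ : ℝ → ℝ → ℝ) (hσ : ∀ t x : ℝ, σ t x = σt t * x)
    (μ : ℝ → ℝ → ℝ)
    (hμx : ∀ t : ℝ, ContDiffOn ℝ 2 (μ t) (Set.Ioi 0)) :
    (∀ t x : ℝ, 0 < x →
        deriv (fun y =>
          (1 / σ t y) * deriv (fun u => σ u y) t +
            σ t y * deriv (fun z => (1 / 2) * deriv (σ t) z - μ t z / σ t z) y) x = 0) ↔
      (∃ α β : ℝ → ℝ, ∀ t x : ℝ, 0 < x →
        μ t x = α t * x + β t * x * Real.log x) := by
  have hG : ∀ t, ContDiffOn ℝ 2 (fun z => μ t z / z) (Ioi 0) := fun t =>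
    (hμx t).div contDiffOn_id fun _ hx => ne_of_gt hx
  calc _ ↔ ∀ t x : ℝ, 0 < x → deriv (fun y => y * deriv (fun z => μ t z / z) y) x = 0 := by
        refine forall_congr' fun t => forall₂_congr fun x hx => ?_
        change deriv (reducibilityBracket σ μ t) x = 0 ↔ _
        rw [deriv_reducibilityBracket_of_linear hσ μ (hσt_pos t).ne' hx.ne', neg_eq_zero]
    _ ↔ ∀ t, ∃ a b : ℝ, ∀ x : ℝ, 0 < x → μ t x / x = a + b * log x :=
        forall_congr' fun t => deriv_id_mul_deriv_eq_zero_iff_eq_add_mul_log (hG t)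
    _ ↔ ∀ t, ∃ a b : ℝ, ∀ x : ℝ, 0 < x → μ t x = a * x + b * x * log x := by
        refine forall_congr' fun t => exists₂_congr fun a b => forall₂_congr fun x hx => ?_
        rw [div_eq_iff hx.ne']
        ring_nf
    _ ↔ _ := by simp only [Classical.skolem]

/-- G-class: for a diffusion coefficient `σ(t,x) = σ̃(t)·x` on the state space `(0,∞)`,
the reducibility PDE holds if and only if the drift has the form
`μ(t,x) = α(t)x + β(t)·x·log x`. -/
theorem pde_G_class
    (σt : ℝ → ℝ) (hσt : ContDiff ℝ 1 σt) (hσt_pos : ∀ t : ℝ, 0 < σt t)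
    (σ : ℝ → ℝ → ℝ) (hσ : ∀ t x : ℝ, σ t x = σt t * x)
    (μ : ℝ → ℝ → ℝ)
    (hμt : ∀ x : ℝ, 0 < x → ContDiff ℝ 1 fun t => μ t x)
    (hμx : ∀ t : ℝ, ContDiffOn ℝ 2 (μ t) (Set.Ioi 0)) :
    (∀ t x : ℝ, 0 < x →
        deriv (fun y =>
          (1 / σ t y) * deriv (fun u => σ u y) t +
            σ t y * deriv (fun z => (1 / 2) * deriv (σ t) z - μ t z / σ t z) y) x = 0) ↔
      (∃ α β : ℝ → ℝ, ∀ t x : ℝ, 0 < x →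
        μ t x = α t * x + β t * x * Real.log x) :=
  pde_G_class_general σt hσt_pos σ hσ μ hμx
end

section
/- Let κ > 0, σ > 0, α ∈ ℝ, x_0 ∈ ℝ, and let W̃ = (W̃_s)_{s≥0} be a standard Brownian motion. Define s(t) = σ²(e^{2κt} − 1)/(2κ), its inverse t(s) = (1/(2κ)) log(1 + 2κs/σ²), and the Ornstein-Uhlenbeck process X_t := α + e^{−κt}(x_0 − α + W̃_{s(t)}) for t ≥ 0 (the solution of dX_t = κ(α − X_t)dt + σ dW_t with X_0 = x_0). Then for any T > 0 and any functions a, b : [0,T] → ℝ with a(0) < x_0 < b(0), P(a(t) < X_t < b(t) for all t ∈ [0,T]) = P(c(s) < W̃_s < d(s) for all s ∈ [0,S]), where c(s) = α − x_0 + (a(t(s)) − α)·(1 + 2κs/σ²)^{1/2}, d(s) = α − x_0 + (b(t(s)) − α)·(1 + 2κs/σ²)^{1/2}, and S = σ²(e^{2κT} − 1)/(2κ). -/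
/-!
The two events coincide path by path. The clock `s` is a strictly increasing bijection of
`[0, T]` onto `[0, S]` with inverse `tinv`, and at `u = s t` one has
`√(1 + 2κu/σ²) = e^{κt}`; multiplying the barrier inequalities for `X t` by `e^{κt} > 0`
turns them into the barrier inequalities for `W (s t)`.
-/

open MeasureTheory ProbabilityTheory Filter Set

namespace OrnsteinUhlenbeck

variable {κ σ : ℝ}

/-- `∫₀ᵗ σ² e^{2κr} dr`, the variance of `σ ∫₀ᵗ e^{κr} dW_r`. -/
noncomputable def clock (κ σ t : ℝ) : ℝ := σ ^ 2 * (Real.exp (2 * κ * t) - 1) / (2 * κ)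

noncomputable def clockInv (κ σ u : ℝ) : ℝ := (1 / (2 * κ)) * Real.log (1 + 2 * κ * u / σ ^ 2)

@[simp]
lemma clock_zero : clock κ σ 0 = 0 := by
  simp [clock]

lemma one_add_mul_clock_div (hκ : κ ≠ 0) (hσ : σ ≠ 0) (t : ℝ) :
    1 + 2 * κ * clock κ σ t / σ ^ 2 = Real.exp (2 * κ * t) := by
  unfold clock
  field_simp
  ring

lemma sqrt_one_add_mul_clock_div (hκ : κ ≠ 0) (hσ : σ ≠ 0) (t : ℝ) :
    √(1 + 2 * κ * clock κ σ t / σ ^ 2) = Real.exp (κ * t) := by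
  rw [one_add_mul_clock_div hκ hσ, ← Real.exp_half]
  ring_nf

lemma clockInv_clock (hκ : κ ≠ 0) (hσ : σ ≠ 0) (t : ℝ) : clockInv κ σ (clock κ σ t) = t := by
  rw [clockInv, one_add_mul_clock_div hκ hσ, Real.log_exp]
  field_simp

lemma clock_clockInv (hκ : κ ≠ 0) (hσ : σ ≠ 0) {u : ℝ} (hu : 0 < 1 + 2 * κ * u / σ ^ 2) :
    clock κ σ (clockInv κ σ u) = u := by
  have hexp : Real.exp (2 * κ * clockInv κ σ u) = 1 + 2 * κ * u / σ ^ 2 := by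
    rw [clockInv, ← mul_assoc, mul_one_div_cancel (mul_ne_zero two_ne_zero hκ), one_mul,
      Real.exp_log hu]
  rw [clock, hexp]
  field_simp
  ring

lemma strictMono_clock (hκ : 0 < κ) (hσ : σ ≠ 0) : StrictMono (clock κ σ) := by
  intro t t' h
  unfold clock
  gcongr

lemma bijOn_clock (hκ : 0 < κ) (hσ : σ ≠ 0) (T : ℝ) :
    BijOn (clock κ σ) (Icc 0 T) (Icc 0 (clock κ σ T)) := by
  have hmono := strictMono_clock hκ hσ
  have hinv : InvOn (clockInv κ σ) (clock κ σ) (Icc 0 T) (Icc 0 (clock κ σ T)) :=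
    ⟨fun t _ => clockInv_clock hκ.ne' hσ t,
     fun u hu => clock_clockInv hκ.ne' hσ (by have := hu.1; positivity)⟩
  refine hinv.bijOn ?_ ?_
  · simpa using hmono.monotone.mapsTo_Icc (a := 0) (b := T)
  · intro u hu
    have hu' : clock κ σ (clockInv κ σ u) = u := hinv.2 hu
    constructor
    · rw [← hmono.le_iff_le, clock_zero, hu']
      exact hu.1
    · rw [← hmono.le_iff_le, hu']
      exact hu.2

lemma lt_add_inv_mul_and_add_inv_mul_lt_iff {E : ℝ} (hE : 0 < E) (α x₀ w y z : ℝ) :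
    (y < α + E⁻¹ * (x₀ - α + w) ∧ α + E⁻¹ * (x₀ - α + w) < z) ↔
      (α - x₀ + (y - α) * E < w ∧ w < α - x₀ + (z - α) * E) := by
  rw [← sub_lt_iff_lt_add', lt_inv_mul_iff₀ hE, ← lt_sub_iff_add_lt', inv_mul_lt_iff₀ hE]
  constructor <;> rintro ⟨h₁, h₂⟩ <;> constructor <;> linarith

end OrnsteinUhlenbeck

open OrnsteinUhlenbeck

theorem bcp_ornstein_uhlenbeck_general
    {Ω : Type*} [MeasureSpace Ω]
    (κ σ α x₀ : ℝ) (hκ : 0 < κ) (hσ : 0 < σ)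
    (W : ℝ → Ω → ℝ)
    (s tinv : ℝ → ℝ)
    (hs : ∀ t : ℝ, s t = σ ^ 2 * (Real.exp (2 * κ * t) - 1) / (2 * κ))
    (htinv : ∀ u : ℝ, tinv u = (1 / (2 * κ)) * Real.log (1 + 2 * κ * u / σ ^ 2))
    (X : ℝ → Ω → ℝ)
    (hX : ∀ (t : ℝ) (ω : Ω), X t ω = α + Real.exp (-κ * t) * (x₀ - α + W (s t) ω))
    (T : ℝ)
    (a b : ℝ → ℝ)
    (S : ℝ) (hS : S = σ ^ 2 * (Real.exp (2 * κ * T) - 1) / (2 * κ)) :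
    ℙ {ω : Ω | ∀ t ∈ Set.Icc (0 : ℝ) T, a t < X t ω ∧ X t ω < b t} =
      ℙ {ω : Ω | ∀ u ∈ Set.Icc (0 : ℝ) S,
        α - x₀ + (a (tinv u) - α) * Real.sqrt (1 + 2 * κ * u / σ ^ 2) < W u ω ∧
        W u ω < α - x₀ + (b (tinv u) - α) * Real.sqrt (1 + 2 * κ * u / σ ^ 2)} := by
  obtain rfl : s = clock κ σ := funext hs
  obtain rfl : tinv = clockInv κ σ := funext htinv
  obtain rfl : S = clock κ σ T := hS
  congr 1
  ext ω
  simp only [mem_ofPred_eq, (bijOn_clock hκ hσ.ne' T).forall, hX, clockInv_clock hκ.ne' hσ.ne',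
    sqrt_one_add_mul_clock_div hκ.ne' hσ.ne', neg_mul, Real.exp_neg]
  exact forall₂_congr fun t _ => lt_add_inv_mul_and_add_inv_mul_lt_iff (Real.exp_pos _) _ _ _ _ _

/-- Boundary crossing probabilities for the Ornstein-Uhlenbeck process, reduced to
boundary crossing probabilities for a standard Brownian motion. -/
theorem bcp_ornstein_uhlenbeck
    {Ω : Type*} [MeasureSpace Ω] [IsProbabilityMeasure (ℙ : Measure Ω)]
    (κ σ α x₀ : ℝ) (hκ : 0 < κ) (hσ : 0 < σ)
    (W : ℝ → Ω → ℝ) (hW : IsStandardBM W)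
    (s tinv : ℝ → ℝ)
    (hs : ∀ t : ℝ, s t = σ ^ 2 * (Real.exp (2 * κ * t) - 1) / (2 * κ))
    (htinv : ∀ u : ℝ, tinv u = (1 / (2 * κ)) * Real.log (1 + 2 * κ * u / σ ^ 2))
    (X : ℝ → Ω → ℝ)
    (hX : ∀ (t : ℝ) (ω : Ω), X t ω = α + Real.exp (-κ * t) * (x₀ - α + W (s t) ω))
    (T : ℝ) (hT : 0 < T)
    (a b : ℝ → ℝ) (ha0 : a 0 < x₀) (hb0 : x₀ < b 0)
    (S : ℝ) (hS : S = σ ^ 2 * (Real.exp (2 * κ * T) - 1) / (2 * κ)) :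
    ℙ {ω : Ω | ∀ t ∈ Set.Icc (0 : ℝ) T, a t < X t ω ∧ X t ω < b t} =
      ℙ {ω : Ω | ∀ u ∈ Set.Icc (0 : ℝ) S,
        α - x₀ + (a (tinv u) - α) * Real.sqrt (1 + 2 * κ * u / σ ^ 2) < W u ω ∧
        W u ω < α - x₀ + (b (tinv u) - α) * Real.sqrt (1 + 2 * κ * u / σ ^ 2)} :=
  bcp_ornstein_uhlenbeck_general κ σ α x₀ hκ hσ W s tinv hs htinv X hX T a b S hS
end
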